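/- Let n, d, l be integers with d ≥ l ≥ 1. Suppose f : {−1,1}^n → ℝ and S ⊆ [n] are such that every value of ∂_S f is an integer multiple of 1/2^{d−1}, and 0 < Inf_S(f) < 1. Then ∫₀^∞ (e^{2t} − 1)^{l−1} e^{−2lt} ‖P_t ∂_S f‖₂² dt ≤ (l−1)! · 4^{d−1} · Inf_S(f) / (ln(1/Inf_S(f)))^l. -/

import Mathlib

open Finset MeasureTheory
open scoped BigOperators Classical

/-- Expectation over the uniform measure on the hypercube `{-1,1}^n` (coded by `Bool`). -/
noncomputable def expectation {n : ℕ} (f : (Fin n → Bool) → ℝ) : ℝ :=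
  (∑ x : Fin n → Bool, f x) / 2 ^ n

/-- Probability of an event under the uniform measure on the hypercube. -/
noncomputable def pr {n : ℕ} (P : (Fin n → Bool) → Prop) : ℝ :=
  expectation (fun x => if P x then (1 : ℝ) else 0)

/-- Walsh function `χ_S`. -/
noncomputable def walsh {n : ℕ} (S : Finset (Fin n)) (x : Fin n → Bool) : ℝ :=
  ∏ j ∈ S, (if x j then (1 : ℝ) else -1)

/-- Fourier--Walsh coefficient `f̂(S)`. -/
noncomputable def fwCoeff {n : ℕ} (f : (Fin n → Bool) → ℝ) (S : Finset (Fin n)) : ℝ :=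
  expectation (fun x => f x * walsh S x)

/-- T-influence `Inf_S(f) = ∑_{T ⊇ S} f̂(T)^2`. -/
noncomputable def TInf {n : ℕ} (f : (Fin n → Bool) → ℝ) (S : Finset (Fin n)) : ℝ :=
  ∑ T ∈ Finset.univ.filter (fun T : Finset (Fin n) => S ⊆ T), fwCoeff f T ^ 2

/-- Fourier weight at degrees `≥ d`. -/
noncomputable def Wge {n : ℕ} (d : ℕ) (f : (Fin n → Bool) → ℝ) : ℝ :=
  ∑ T ∈ Finset.univ.filter (fun T : Finset (Fin n) => d ≤ T.card), fwCoeff f T ^ 2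

/-- Flip coordinate `i`. -/
def flipBit {n : ℕ} (y : Fin n → Bool) (i : Fin n) : Fin n → Bool :=
  Function.update y i (!(y i))

/-- `i` is `S`-pivotal for `f` on input `x`. -/
def pivotal {n : ℕ} (f : (Fin n → Bool) → ℝ) (S : Finset (Fin n)) (i : Fin n)
    (x : Fin n → Bool) : Prop :=
  ∃ y : Fin n → Bool, (∀ j, j ∉ S → y j = x j) ∧ f y ≠ f (flipBit y i)

/-- Joint influence `JInf_S(f)`. -/
noncomputable def JInf {n : ℕ} (f : (Fin n → Bool) → ℝ) (S : Finset (Fin n)) : ℝ :=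
  pr (fun x => ∀ i ∈ S, pivotal f S i x)

/-- Single-bit discrete partial derivative. -/
noncomputable def deriv1 {n : ℕ} (i : Fin n) (f : (Fin n → Bool) → ℝ) :
    (Fin n → Bool) → ℝ :=
  fun x => (f (Function.update x i true) - f (Function.update x i false)) / 2

/-- Multi-bit discrete partial derivative `∂_S f`. -/
noncomputable def derivS {n : ℕ} (S : Finset (Fin n)) (f : (Fin n → Bool) → ℝ) :
    (Fin n → Bool) → ℝ :=
  S.toList.foldr deriv1 f

/-- Heat semigroup `P_t`. -/
noncomputable def heat {n : ℕ} (t : ℝ) (g : (Fin n → Bool) → ℝ) : (Fin n → Bool) → ℝ :=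
  fun x => ∑ S : Finset (Fin n), Real.exp (-(S.card : ℝ) * t) * fwCoeff g S * walsh S x

/-- Squared `L²` norm. -/
noncomputable def norm2sq {n : ℕ} (g : (Fin n → Bool) → ℝ) : ℝ :=
  expectation (fun x => g x ^ 2)

/-- Total influence. -/
noncomputable def totinf {n : ℕ} (f : (Fin n → Bool) → ℝ) : ℝ :=
  ∑ i : Fin n, TInf f {i}


namespace HC

noncomputable def bsign (b : Bool) : ℝ := if b then 1 else -1

variable {n : ℕ}

lemma bsign_sq (b : Bool) : bsign b * bsign b = 1 := by cases b <;> simp [bsign]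

lemma walsh_eq (S : Finset (Fin n)) (x : Fin n → Bool) :
    walsh S x = ∏ j ∈ S, bsign (x j) := rfl

lemma expectation_sum {ι : Type*} (s : Finset ι) (F : ι → (Fin n → Bool) → ℝ) :
    expectation (fun x => ∑ i ∈ s, F i x) = ∑ i ∈ s, expectation (F i) := by
  unfold expectation
  rw [Finset.sum_comm, Finset.sum_div]

lemma expectation_const_mul (c : ℝ) (f : (Fin n → Bool) → ℝ) :
    expectation (fun x => c * f x) = c * expectation f := by
  unfold expectation
  rw [← Finset.mul_sum, mul_div_assoc]

lemma expectation_mul_const (c : ℝ) (f : (Fin n → Bool) → ℝ) :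
    expectation (fun x => f x * c) = expectation f * c := by
  unfold expectation
  rw [← Finset.sum_mul, div_mul_eq_mul_div]

lemma expectation_nonneg {f : (Fin n → Bool) → ℝ} (h : ∀ x, 0 ≤ f x) :
    0 ≤ expectation f := by
  unfold expectation
  have : 0 ≤ ∑ x : Fin n → Bool, f x := Finset.sum_nonneg fun x _ => h x
  positivity

lemma expectation_mono {f g : (Fin n → Bool) → ℝ} (h : ∀ x, f x ≤ g x) :
    expectation f ≤ expectation g := by
  unfold expectation
  have : (∑ x : Fin n → Bool, f x) ≤ ∑ x : Fin n → Bool, g x :=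
    Finset.sum_le_sum fun x _ => h x
  exact div_le_div_of_nonneg_right this (by positivity)

lemma walsh_mul (S T : Finset (Fin n)) (x : Fin n → Bool) :
    walsh S x * walsh T x = walsh ((S \ T) ∪ (T \ S)) x := by
  simp only [walsh_eq]
  have key : ∀ A B : Finset (Fin n), ∏ j ∈ A, bsign (x j)
      = (∏ j ∈ A \ B, bsign (x j)) * ∏ j ∈ A ∩ B, bsign (x j) := by
    intro A B
    rw [← Finset.prod_union (Finset.disjoint_sdiff_inter A B), Finset.sdiff_union_inter]
  have h1 : (∏ j ∈ S ∩ T, bsign (x j)) * ∏ j ∈ S ∩ T, bsign (x j) = 1 := by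
    rw [← Finset.prod_mul_distrib]
    exact Finset.prod_eq_one fun j _ => bsign_sq (x j)
  rw [key S T, key T S, Finset.inter_comm T S, Finset.prod_union disjoint_sdiff_sdiff,
    mul_mul_mul_comm, h1, mul_one]

lemma flipBit_flipBit (y : Fin n → Bool) (i : Fin n) : flipBit (flipBit y i) i = y := by
  unfold flipBit
  simp [Function.update_idem]

lemma walsh_flipBit {V : Finset (Fin n)} {i : Fin n} (hi : i ∈ V) (y : Fin n → Bool) :
    walsh V (flipBit y i) = - walsh V y := by
  rw [walsh_eq, walsh_eq, ← Finset.mul_prod_erase V _ hi, ← Finset.mul_prod_erase V _ hi]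
  have h1 : bsign (flipBit y i i) = - bsign (y i) := by
    unfold flipBit; cases h : y i <;> simp [h, bsign]
  have h2 : ∀ j ∈ V.erase i, bsign (flipBit y i j) = bsign (y j) := by
    intro j hj
    have : j ≠ i := Finset.ne_of_mem_erase hj
    unfold flipBit
    rw [Function.update_of_ne this]
  rw [Finset.prod_congr rfl h2, h1]
  ring

lemma expectation_walsh_eq_zero {V : Finset (Fin n)} (h : V.Nonempty) :
    expectation (walsh V) = 0 := by
  obtain ⟨i, hi⟩ := h
  unfold expectation
  rw [Finset.sum_ninvolution (fun y => flipBit y i)]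
  · simp
  · intro y
    rw [walsh_flipBit hi y]; ring
  · intro y hy
    intro hcon
    apply hy
    have : flipBit y i i = !(y i) := by unfold flipBit; simp
    rw [hcon] at this
    exact absurd this (by cases y i <;> simp)
  · intro y; exact Finset.mem_univ _
  · intro y; exact flipBit_flipBit y i

lemma expectation_one : expectation (fun _ : Fin n → Bool => (1:ℝ)) = 1 := by
  unfold expectation
  rw [Finset.sum_const, Finset.card_univ]
  simp [Fintype.card_fun]

lemma expectation_walsh_mul_walsh (S T : Finset (Fin n)) :
    expectation (fun x => walsh S x * walsh T x) = if S = T then 1 else 0 := by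
  have hfun : (fun x : Fin n → Bool => walsh S x * walsh T x)
      = walsh ((S \ T) ∪ (T \ S)) := funext fun x => walsh_mul S T x
  rw [hfun]
  by_cases h : S = T
  · subst h
    simp only [Finset.sdiff_self, Finset.union_empty, if_true]
    have : walsh (∅ : Finset (Fin n)) = fun _ => (1:ℝ) := by
      funext x; rw [walsh_eq]; simp
    rw [this, expectation_one]
  · rw [if_neg h]
    apply expectation_walsh_eq_zero
    rw [Finset.nonempty_iff_ne_empty]
    intro hcon
    rw [Finset.union_eq_empty] at hcon
    exact h (Finset.Subset.antisymm
      (Finset.sdiff_eq_empty_iff_subset.mp hcon.1)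
      (Finset.sdiff_eq_empty_iff_subset.mp hcon.2))

lemma prod_one_add (a : Fin n → ℝ) :
    ∏ j, (1 + a j) = ∑ S : Finset (Fin n), ∏ j ∈ S, a j := by
  have : ∀ j ∈ Finset.univ (α := Fin n), 1 + a j = a j + 1 := fun j _ => add_comm _ _
  rw [Finset.prod_congr rfl this, Finset.prod_add]
  rw [Finset.powerset_univ]
  apply Finset.sum_congr rfl
  intro S _
  simp

lemma kernel_expansion (ρ : ℝ) (x y : Fin n → Bool) :
    ∏ j, (1 + ρ * bsign (x j) * bsign (y j))
      = ∑ S : Finset (Fin n), ρ ^ S.card * walsh S x * walsh S y := by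
  rw [prod_one_add fun j => ρ * bsign (x j) * bsign (y j)]
  apply Finset.sum_congr rfl
  intro S _
  rw [walsh_eq, walsh_eq, Finset.prod_mul_distrib, Finset.prod_mul_distrib,
    Finset.prod_const]

lemma kernel_delta (x y : Fin n → Bool) :
    ∏ j, (1 + bsign (x j) * bsign (y j)) = if x = y then (2:ℝ) ^ n else 0 := by
  by_cases h : x = y
  · subst h
    rw [if_pos rfl]
    have : ∀ j ∈ Finset.univ (α := Fin n), 1 + bsign (x j) * bsign (x j) = 2 := by
      intro j _; rw [bsign_sq]; norm_num
    rw [Finset.prod_congr rfl this, Finset.prod_const, Finset.card_univ, Fintype.card_fin]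
  · rw [if_neg h]
    have : ∃ j, x j ≠ y j := by
      by_contra hcon
      push_neg at hcon
      exact h (funext hcon)
    obtain ⟨j, hj⟩ := this
    apply Finset.prod_eq_zero (Finset.mem_univ j)
    have : bsign (x j) * bsign (y j) = -1 := by
      cases hx : x j <;> cases hy : y j <;> simp_all [bsign]
    rw [this]; ring

lemma inversion (g : (Fin n → Bool) → ℝ) (x : Fin n → Bool) :
    ∑ S : Finset (Fin n), fwCoeff g S * walsh S x = g x := by
  have step1 : ∀ S : Finset (Fin n), fwCoeff g S * walsh S x
      = expectation (fun y => g y * (walsh S y * walsh S x)) := by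
    intro S
    rw [fwCoeff, ← expectation_mul_const (walsh S x)]
    congr 1; funext y; ring
  simp only [step1]
  rw [← expectation_sum]
  have : (fun y => ∑ S : Finset (Fin n), g y * (walsh S y * walsh S x))
      = fun y => g y * (if y = x then (2:ℝ)^n else 0) := by
    funext y
    rw [← Finset.mul_sum]
    congr 1
    rw [← kernel_delta y x]
    have hke := kernel_expansion (n := n) 1 y x
    simp only [one_pow, one_mul] at hke
    exact hke.symm
  rw [this]
  unfold expectation
  have hsplit : ∀ y : Fin n → Bool, g y * (if y = x then (2:ℝ)^n else 0)
      = if y = x then g y * 2^n else 0 := by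
    intro y; split <;> simp
  simp only [hsplit]
  rw [Finset.sum_ite_eq' Finset.univ x (fun y => g y * 2^n)]
  have h2 : ((2:ℝ)^n) ≠ 0 := by positivity
  simp only [Finset.mem_univ, if_true]
  field_simp

lemma parseval (g : (Fin n → Bool) → ℝ) :
    norm2sq g = ∑ S : Finset (Fin n), fwCoeff g S ^ 2 := by
  have : norm2sq g = expectation (fun x => ∑ S : Finset (Fin n),
      fwCoeff g S * (g x * walsh S x)) := by
    unfold norm2sq
    congr 1
    funext x
    have hr : ∑ S : Finset (Fin n), fwCoeff g S * (g x * walsh S x)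
        = g x * ∑ S : Finset (Fin n), fwCoeff g S * walsh S x := by
      rw [Finset.mul_sum]
      apply Finset.sum_congr rfl
      intro S _
      ring
    rw [hr, inversion g x, sq]
  rw [this, expectation_sum]
  apply Finset.sum_congr rfl
  intro S _
  rw [expectation_const_mul, ← fwCoeff, sq]

end HC

namespace HC2
open HC
variable {n : ℕ}

lemma deriv1_walsh (i : Fin n) (T : Finset (Fin n)) (x : Fin n → Bool) :
    deriv1 i (walsh T) x = if i ∈ T then walsh (T.erase i) x else 0 := by
  unfold deriv1
  by_cases hi : i ∈ T
  · rw [if_pos hi]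
    have key : ∀ b : Bool, walsh T (Function.update x i b) = bsign b * walsh (T.erase i) x := by
      intro b
      rw [walsh_eq, walsh_eq, ← Finset.mul_prod_erase T _ hi]
      congr 1
      · rw [Function.update_self]
      · apply Finset.prod_congr rfl
        intro j hj
        rw [Function.update_of_ne (Finset.ne_of_mem_erase hj)]
    rw [key true, key false]
    have hb1 : bsign true = 1 := rfl
    have hb2 : bsign false = -1 := rfl
    rw [hb1, hb2]
    ring
  · rw [if_neg hi]
    have key : ∀ b : Bool, walsh T (Function.update x i b) = walsh T x := by
      intro b
      rw [walsh_eq, walsh_eq]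
      apply Finset.prod_congr rfl
      intro j hj
      have hne : j ≠ i := by rintro rfl; exact hi hj
      rw [Function.update_of_ne hne]
    rw [key true, key false]
    ring

lemma deriv1_expand (i : Fin n) (h : (Fin n → Bool) → ℝ) (x : Fin n → Bool) :
    deriv1 i h x = ∑ T : Finset (Fin n), fwCoeff h T * deriv1 i (walsh T) x := by
  unfold deriv1
  rw [← inversion h (Function.update x i true), ← inversion h (Function.update x i false),
    ← Finset.sum_sub_distrib, Finset.sum_div]
  apply Finset.sum_congr rfl
  intro T _
  ring

lemma fwCoeff_deriv1 (i : Fin n) (h : (Fin n → Bool) → ℝ) (U : Finset (Fin n)) :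
    fwCoeff (deriv1 i h) U = if i ∈ U then 0 else fwCoeff h (insert i U) := by
  have e1 : (fun x => deriv1 i h x * walsh U x)
      = fun x => ∑ T : Finset (Fin n), fwCoeff h T * (deriv1 i (walsh T) x * walsh U x) := by
    funext x
    rw [deriv1_expand i h x, Finset.sum_mul]
    exact Finset.sum_congr rfl fun T _ => by ring
  rw [fwCoeff, e1, expectation_sum]
  have e2 : ∀ T : Finset (Fin n),
      expectation (fun x => fwCoeff h T * (deriv1 i (walsh T) x * walsh U x))
      = fwCoeff h T * (if i ∈ T then (if T.erase i = U then (1:ℝ) else 0) else 0) := by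
    intro T
    rw [expectation_const_mul]
    congr 1
    by_cases hiT : i ∈ T
    · have e : (fun x => deriv1 i (walsh T) x * walsh U x)
          = fun x => walsh (T.erase i) x * walsh U x := by
        funext x; rw [deriv1_walsh, if_pos hiT]
      rw [e, expectation_walsh_mul_walsh, if_pos hiT]
    · have e : (fun x => deriv1 i (walsh T) x * walsh U x) = fun _ => (0:ℝ) := by
        funext x; rw [deriv1_walsh, if_neg hiT, zero_mul]
      rw [e, if_neg hiT]
      unfold expectation
      simp
  rw [Finset.sum_congr rfl fun T _ => e2 T]
  by_cases hiU : i ∈ U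
  · rw [if_pos hiU]
    apply Finset.sum_eq_zero
    intro T _
    by_cases hiT : i ∈ T
    · rw [if_pos hiT, if_neg, mul_zero]
      intro hEq
      exact (hEq ▸ Finset.notMem_erase i T) hiU
    · rw [if_neg hiT, mul_zero]
  · rw [if_neg hiU]
    rw [Finset.sum_eq_single (insert i U)]
    · rw [if_pos (Finset.mem_insert_self i U), if_pos (Finset.erase_insert hiU), mul_one]
    · intro T _ hTne
      by_cases hiT : i ∈ T
      · rw [if_pos hiT, if_neg, mul_zero]
        intro hEq
        exact hTne (by rw [← hEq, Finset.insert_erase hiT])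
      · rw [if_neg hiT, mul_zero]
    · intro hcon
      exact absurd (Finset.mem_univ _) hcon

lemma fwCoeff_foldr (L : List (Fin n)) (hL : L.Nodup) (f : (Fin n → Bool) → ℝ)
    (U : Finset (Fin n)) :
    fwCoeff (L.foldr deriv1 f) U
      = if (∀ i ∈ L, i ∉ U) then fwCoeff f (U ∪ L.toFinset) else 0 := by
  induction L generalizing U with
  | nil => simp
  | cons i L ih =>
    have hnd := List.nodup_cons.mp hL
    rw [List.foldr_cons, fwCoeff_deriv1, ih hnd.2]
    by_cases hiU : i ∈ U
    · rw [if_pos hiU, if_neg (fun hall => (hall i List.mem_cons_self) hiU)]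
    · rw [if_neg hiU]
      have hcond : (∀ j ∈ L, j ∉ insert i U) ↔ (∀ j ∈ i :: L, j ∉ U) := by
        constructor
        · intro h j hj
          rcases List.mem_cons.mp hj with rfl | hjL
          · exact hiU
          · exact fun hjU => h j hjL (Finset.mem_insert_of_mem hjU)
        · intro h j hjL hjins
          rcases Finset.mem_insert.mp hjins with rfl | hjU
          · exact hnd.1 hjL
          · exact h j (List.mem_cons_of_mem i hjL) hjU
      have hset : insert i U ∪ L.toFinset = U ∪ (i :: L).toFinset := by
        rw [List.toFinset_cons, Finset.insert_union, Finset.union_insert]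
      rw [hset]
      by_cases hc : ∀ j ∈ i :: L, j ∉ U
      · rw [if_pos (hcond.mpr hc), if_pos hc]
      · rw [if_neg (fun hh => hc (hcond.mp hh)), if_neg hc]

lemma fwCoeff_derivS (S : Finset (Fin n)) (f : (Fin n → Bool) → ℝ) (U : Finset (Fin n)) :
    fwCoeff (derivS S f) U = if (∀ i ∈ S, i ∉ U) then fwCoeff f (U ∪ S) else 0 := by
  unfold derivS
  rw [fwCoeff_foldr _ (Finset.nodup_toList S)]
  simp only [Finset.mem_toList, Finset.toList_toFinset]

lemma norm2sq_derivS (f : (Fin n → Bool) → ℝ) (S : Finset (Fin n)) :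
    norm2sq (derivS S f) = TInf f S := by
  rw [parseval, TInf]
  have e : ∀ U : Finset (Fin n), fwCoeff (derivS S f) U ^ 2
      = if (∀ i ∈ S, i ∉ U) then fwCoeff f (U ∪ S) ^ 2 else 0 := by
    intro U
    rw [fwCoeff_derivS]
    by_cases h : ∀ i ∈ S, i ∉ U
    · rw [if_pos h, if_pos h]
    · rw [if_neg h, if_neg h]
      norm_num
  rw [Finset.sum_congr rfl fun U _ => e U, ← Finset.sum_filter]
  apply Finset.sum_nbij' (i := fun U => U ∪ S) (j := fun T => T \ S)
  · intro U hU
    simp only [Finset.mem_filter, Finset.mem_univ, true_and]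
    exact Finset.subset_union_right
  · intro T hT
    simp only [Finset.mem_filter, Finset.mem_univ, true_and] at hT ⊢
    intro i hi hicon
    exact (Finset.mem_sdiff.mp hicon).2 hi
  · intro U hU
    simp only [Finset.mem_filter, Finset.mem_univ, true_and] at hU
    ext a
    simp only [Finset.mem_sdiff, Finset.mem_union]
    constructor
    · rintro ⟨ha | ha, haS⟩
      · exact ha
      · exact absurd ha haS
    · intro ha
      exact ⟨Or.inl ha, fun haS => hU a haS ha⟩
  · intro T hT
    simp only [Finset.mem_filter, Finset.mem_univ, true_and] at hT
    exact Finset.sdiff_union_of_subset hT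
  · intro U _
    rfl


end HC2

namespace TP
open Real Set Filter

noncomputable def Ffun (p u : ℝ) : ℝ := ((1+u)^p + (1-u)^p)/2 - 1 - (p*(p-1)/2)*u^2
noncomputable def Gfun (p u : ℝ) : ℝ := (p/2)*((1+u)^(p-1) - (1-u)^(p-1)) - p*(p-1)*u

lemma hasDerivAt_one_add (u q : ℝ) (h : -1 < u) :
    HasDerivAt (fun u : ℝ => (1+u) ^ q) (q * (1+u)^(q-1)) u := by
  have h1 : HasDerivAt (fun u : ℝ => 1 + u) 1 u := (hasDerivAt_id u).const_add 1
  have h2 := h1.rpow_const (p := q) (Or.inl (ne_of_gt (by linarith : (0:ℝ) < 1+u)))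
  simpa using h2

lemma hasDerivAt_one_sub (u q : ℝ) (h : u < 1) :
    HasDerivAt (fun u : ℝ => (1-u) ^ q) (-(q * (1-u)^(q-1))) u := by
  have h1 : HasDerivAt (fun u : ℝ => 1 - u) (-1) u := (hasDerivAt_id u).const_sub 1
  have h2 := h1.rpow_const (p := q) (Or.inl (ne_of_gt (by linarith : (0:ℝ) < 1-u)))
  rw [show -1 * q * (1-u)^(q-1) = -(q * (1-u)^(q-1)) from by ring] at h2
  exact h2

lemma hasDerivAt_F {p u : ℝ} (h1 : -1 < u) (h2 : u < 1) :
    HasDerivAt (Ffun p) (Gfun p u) u := by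
  have dA := hasDerivAt_one_add u p h1
  have dB := hasDerivAt_one_sub u p h2
  have dsq : HasDerivAt (fun u : ℝ => (p*(p-1)/2)*u^2) ((p*(p-1)/2)*(2*u)) u := by
    have := (hasDerivAt_pow 2 u).const_mul (p*(p-1)/2)
    simpa using this
  have dconst : HasDerivAt (fun _ : ℝ => (1:ℝ)) 0 u := hasDerivAt_const u 1
  have dd := (((dA.add dB).div_const 2).sub dconst).sub dsq
  have : Gfun p u = ((p * (1 + u) ^ (p - 1) + -(p * (1 - u) ^ (p - 1))) / 2 - 0 -
      p * (p - 1) / 2 * (2 * u)) := by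
    unfold Gfun; ring
  rw [this]
  exact dd

lemma hasDerivAt_G {p u : ℝ} (h1 : -1 < u) (h2 : u < 1) :
    HasDerivAt (Gfun p)
      ((p/2)*((p-1)*(1+u)^(p-2) + (p-1)*(1-u)^(p-2)) - p*(p-1)) u := by
  have dA := hasDerivAt_one_add u (p-1) h1
  have dB := hasDerivAt_one_sub u (p-1) h2
  rw [show p - 1 - 1 = p - 2 from by ring] at dA dB
  have dlin : HasDerivAt (fun u : ℝ => p*(p-1)*u) (p*(p-1)) u := by
    simpa using (hasDerivAt_id u).const_mul (p*(p-1))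
  have dd := ((dA.sub dB).const_mul (p/2)).sub dlin
  have : (p/2)*((p-1)*(1+u)^(p-2) + (p-1)*(1-u)^(p-2)) - p*(p-1)
      = p / 2 * ((p-1) * (1 + u) ^ (p - 2) - -((p-1) * (1 - u) ^ (p - 2))) - p*(p-1) := by
    ring
  rw [this]
  exact dd

lemma Gderiv_nonneg {p u : ℝ} (hp1 : 1 ≤ p) (hp2 : p ≤ 2) (h1 : 0 < u) (h2 : u < 1) :
    0 ≤ (p/2)*((p-1)*(1+u)^(p-2) + (p-1)*(1-u)^(p-2)) - p*(p-1) := by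
  set X := (1+u)^(p-2) with hX
  set Y := (1-u)^(p-2) with hY
  have hXpos : 0 < X := rpow_pos_of_pos (by linarith) _
  have hYpos : 0 < Y := rpow_pos_of_pos (by linarith) _
  have hmul : 1 ≤ X * Y := by
    rw [hX, hY, ← Real.mul_rpow (by linarith) (by linarith)]
    apply Real.one_le_rpow_of_pos_of_le_one_of_nonpos
    · nlinarith
    · nlinarith
    · linarith
  have hsqrt : 1 ≤ Real.sqrt (X*Y) := by
    rw [show (1:ℝ) = Real.sqrt 1 from (Real.sqrt_one).symm]
    exact Real.sqrt_le_sqrt hmul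
  have hsplit : Real.sqrt (X*Y) = Real.sqrt X * Real.sqrt Y := Real.sqrt_mul hXpos.le Y
  have hXY : 2 ≤ X + Y := by
    nlinarith [sq_nonneg (Real.sqrt X - Real.sqrt Y), Real.sq_sqrt hXpos.le,
      Real.sq_sqrt hYpos.le, Real.sqrt_nonneg X, Real.sqrt_nonneg Y]
  nlinarith [mul_nonneg (mul_nonneg (by linarith : (0:ℝ) ≤ p) (by linarith : (0:ℝ) ≤ p-1))
    (by linarith : (0:ℝ) ≤ X+Y-2)]

lemma G_nonneg {p : ℝ} (hp1 : 1 ≤ p) (hp2 : p ≤ 2) {u : ℝ} (hu : u ∈ Ico (0:ℝ) 1) :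
    0 ≤ Gfun p u := by
  have hmono : MonotoneOn (Gfun p) (Ico (0:ℝ) 1) := by
    apply monotoneOn_of_deriv_nonneg (convex_Ico 0 1)
    · intro x hx
      exact (hasDerivAt_G (by linarith [hx.1] : (-1:ℝ) < x) hx.2).continuousAt.continuousWithinAt
    · intro x hx
      rw [interior_Ico] at hx
      exact (hasDerivAt_G (by linarith [hx.1] : (-1:ℝ) < x) hx.2).differentiableAt.differentiableWithinAt
    · intro x hx
      rw [interior_Ico] at hx
      rw [(hasDerivAt_G (by linarith [hx.1] : (-1:ℝ) < x) hx.2).deriv]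
      exact Gderiv_nonneg hp1 hp2 hx.1 hx.2
  have h0 : Gfun p 0 = 0 := by unfold Gfun; norm_num
  have := hmono (show (0:ℝ) ∈ Ico (0:ℝ) 1 from ⟨le_refl 0, by norm_num⟩) hu hu.1
  rw [h0] at this
  exact this

lemma F_nonneg {p : ℝ} (hp1 : 1 ≤ p) (hp2 : p ≤ 2) {u : ℝ} (hu : u ∈ Ico (0:ℝ) 1) :
    0 ≤ Ffun p u := by
  have hmono : MonotoneOn (Ffun p) (Ico (0:ℝ) 1) := by
    apply monotoneOn_of_deriv_nonneg (convex_Ico 0 1)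
    · intro x hx
      exact (hasDerivAt_F (by linarith [hx.1] : (-1:ℝ) < x) hx.2).continuousAt.continuousWithinAt
    · intro x hx
      rw [interior_Ico] at hx
      exact (hasDerivAt_F (by linarith [hx.1] : (-1:ℝ) < x) hx.2).differentiableAt.differentiableWithinAt
    · intro x hx
      rw [interior_Ico] at hx
      rw [(hasDerivAt_F (by linarith [hx.1] : (-1:ℝ) < x) hx.2).deriv]
      exact G_nonneg hp1 hp2 ⟨hx.1.le, hx.2⟩
  have h0 : Ffun p 0 = 0 := by unfold Ffun; norm_num
  have := hmono (show (0:ℝ) ∈ Ico (0:ℝ) 1 from ⟨le_refl 0, by norm_num⟩) hu hu.1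
  rw [h0] at this
  exact this

lemma K_Ico {p : ℝ} (hp1 : 1 ≤ p) (hp2 : p ≤ 2) {u : ℝ} (hu : u ∈ Ico (0:ℝ) 1) :
    (1+(p-1)*u^2)^(p/2) ≤ ((1+u)^p + (1-u)^p)/2 := by
  have hK1 : (1+(p-1)*u^2)^(p/2) ≤ 1 + (p/2)*((p-1)*u^2) := by
    apply rpow_one_add_le_one_add_mul_self
    · nlinarith [sq_nonneg u]
    · linarith
    · linarith
  have hK2 := F_nonneg hp1 hp2 hu
  unfold Ffun at hK2
  nlinarith [hK1, hK2]

lemma K_Icc {p : ℝ} (hp1 : 1 ≤ p) (hp2 : p ≤ 2) {u : ℝ} (hu : u ∈ Icc (0:ℝ) 1) :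
    (1+(p-1)*u^2)^(p/2) ≤ ((1+u)^p + (1-u)^p)/2 := by
  rcases lt_or_eq_of_le hu.2 with h1 | h1
  · exact K_Ico hp1 hp2 ⟨hu.1, h1⟩
  · subst h1
    have hcontL : Continuous (fun u : ℝ => (1+(p-1)*u^2)^(p/2)) := by
      apply Continuous.rpow_const
      · continuity
      · intro x
        left
        have h0 : 0 ≤ (p-1)*x^2 := mul_nonneg (by linarith) (sq_nonneg x)
        intro hc; linarith [hc]
    have hcontR : Continuous (fun u : ℝ => ((1+u)^p + (1-u)^p)/2) := by
      apply Continuous.div_const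
      apply Continuous.add
      · exact Continuous.rpow_const (by continuity) (fun x => Or.inr (by linarith))
      · exact Continuous.rpow_const (by continuity) (fun x => Or.inr (by linarith))
    have hseq : Tendsto (fun k : ℕ => (1 : ℝ) - 1/(k+1)) atTop (nhds 1) := by
      have h0 := tendsto_one_div_add_atTop_nhds_zero_nat (𝕜 := ℝ)
      simpa using tendsto_const_nhds.sub h0
    refine le_of_tendsto_of_tendsto' ((hcontL.tendsto 1).comp hseq)
      ((hcontR.tendsto 1).comp hseq) ?_
    intro k
    apply K_Ico hp1 hp2
    have hk1 : (0:ℝ) < (k:ℝ)+1 := by positivity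
    constructor
    · have : 1/((k:ℝ)+1) ≤ 1 := by
        rw [div_le_one hk1]; linarith [Nat.cast_nonneg (α := ℝ) k]
      linarith
    · have : 0 < 1/((k:ℝ)+1) := by positivity
      linarith

lemma scaled {p : ℝ} (hp1 : 1 ≤ p) (hp2 : p ≤ 2) {A B : ℝ} (hA : 0 ≤ A) (hB : 0 ≤ B) :
    (A^2 + (p-1)*B^2)^(p/2) ≤ ((A+B)^p + |A-B|^p)/2 := by
  have hp0 : (0:ℝ) < p := by linarith
  have hsq : ∀ C : ℝ, 0 ≤ C → (C^2 : ℝ)^(p/2) = C^p := by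
    intro C hC
    rw [← Real.rpow_natCast C 2, ← Real.rpow_mul hC,
      show ((2:ℕ):ℝ)*(p/2) = p from by push_cast; ring]
  rcases le_or_gt B A with hBA | hAB
  · rcases eq_or_lt_of_le hA with hA0 | hA0
    · have hB0 : B = 0 := le_antisymm (by linarith) hB
      rw [← hA0, hB0]
      rw [show ((0:ℝ)^2 + (p-1)*(0:ℝ)^2) = 0 from by ring,
        show ((0:ℝ) + 0) = 0 from by ring, show |(0:ℝ) - 0| = 0 from by simp,
        Real.zero_rpow (by positivity : p/2 ≠ 0), Real.zero_rpow (by linarith : p ≠ 0)]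
      norm_num
    · have hu0 : 0 ≤ B/A := div_nonneg hB hA0.le
      have hu1 : B/A ≤ 1 := by rw [div_le_one hA0]; exact hBA
      set u := B/A with hu
      have hBu : B = A*u := by rw [hu]; field_simp
      have e1 : A^2 + (p-1)*B^2 = A^2*(1+(p-1)*u^2) := by rw [hBu]; ring
      have e2 : A + B = A*(1+u) := by rw [hBu]; ring
      have e3 : |A - B| = A*(1-u) := by
        rw [hBu, show A - A*u = A*(1-u) from by ring]
        exact abs_of_nonneg (mul_nonneg hA0.le (by linarith))
      rw [e1, e2, e3, Real.mul_rpow (sq_nonneg A) (by nlinarith [sq_nonneg u]),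
        Real.mul_rpow hA0.le (by linarith), Real.mul_rpow hA0.le (by linarith),
        hsq A hA0.le]
      have := K_Icc hp1 hp2 ⟨hu0, hu1⟩
      calc A^p * (1+(p-1)*u^2)^(p/2) ≤ A^p * (((1+u)^p + (1-u)^p)/2) := by
            apply mul_le_mul_of_nonneg_left this (Real.rpow_nonneg hA0.le p)
        _ = (A^p*(1+u)^p + A^p*(1-u)^p)/2 := by ring
  · have hBpos : 0 < B := lt_of_le_of_lt hA hAB
    have hu0 : 0 ≤ A/B := div_nonneg hA hBpos.le
    have hu1 : A/B ≤ 1 := by rw [div_le_one hBpos]; linarith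
    set u := A/B with hu
    have hAu : A = B*u := by rw [hu]; field_simp
    have step0 : A^2 + (p-1)*B^2 ≤ B^2*(1+(p-1)*u^2) := by
      have e : B^2*(1+(p-1)*u^2) = B^2 + (p-1)*A^2 := by
        rw [hAu]; ring
      rw [e]
      nlinarith [mul_nonneg (by linarith : (0:ℝ) ≤ 2-p)
        (by nlinarith : (0:ℝ) ≤ B^2 - A^2)]
    have e2 : A + B = B*(1+u) := by rw [hAu]; ring
    have e3 : |A - B| = B*(1-u) := by
      rw [abs_sub_comm, hAu, show B - B*u = B*(1-u) from by ring]
      exact abs_of_nonneg (mul_nonneg hBpos.le (by linarith))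
    calc (A^2 + (p-1)*B^2)^(p/2) ≤ (B^2*(1+(p-1)*u^2))^(p/2) := by
          apply Real.rpow_le_rpow
            (by nlinarith [sq_nonneg A, sq_nonneg B] : (0:ℝ) ≤ A^2 + (p-1)*B^2)
            step0 (by positivity)
      _ = B^p * (1+(p-1)*u^2)^(p/2) := by
          rw [Real.mul_rpow (sq_nonneg B) (by nlinarith [sq_nonneg u]), hsq B hBpos.le]
      _ ≤ B^p * (((1+u)^p + (1-u)^p)/2) := by
          apply mul_le_mul_of_nonneg_left (K_Icc hp1 hp2 ⟨hu0, hu1⟩)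
            (Real.rpow_nonneg hBpos.le p)
      _ = ((A+B)^p + |A-B|^p)/2 := by
          rw [e2, e3, Real.mul_rpow hBpos.le (by linarith),
            Real.mul_rpow hBpos.le (by linarith)]
          ring

theorem two_point {ρ : ℝ} (hρ0 : 0 ≤ ρ) (hρ1 : ρ ≤ 1) (a b : ℝ) :
    a^2 + ρ^2*b^2 ≤ ((|a+b|^(1+ρ^2) + |a-b|^(1+ρ^2))/2)^(2/(1+ρ^2)) := by
  set p := 1 + ρ^2 with hp
  have hp1 : 1 ≤ p := by nlinarith [sq_nonneg ρ]
  have hp2 : p ≤ 2 := by nlinarith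
  have hp0 : (0:ℝ) < p := by linarith
  have habs : |a+b|^p + |a-b|^p = (|a|+|b|)^p + |(|a|-|b|)|^p := by
    rcases le_or_gt 0 a with ha | ha <;> rcases le_or_gt 0 b with hb | hb
    · rw [abs_of_nonneg ha, abs_of_nonneg hb,
        abs_of_nonneg (by linarith : (0:ℝ) ≤ a + b)]
    · rw [abs_of_nonneg ha, abs_of_neg hb,
        show a - -b = a + b from by ring,
        show a + -b = a - b from by ring,
        abs_of_nonneg (by linarith : (0:ℝ) ≤ a - b)]
      exact add_comm _ _
    · rw [abs_of_neg ha, abs_of_nonneg hb,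
        show -a + b = -(a - b) from by ring,
        show -a - b = -(a + b) from by ring, abs_neg,
        abs_of_neg (by linarith : a - b < 0)]
      exact add_comm _ _
    · rw [abs_of_neg ha, abs_of_neg hb,
        show -a + -b = -(a + b) from by ring,
        show -a - -b = -(a - b) from by ring, abs_neg,
        abs_of_neg (by linarith : a + b < 0)]
  have hmain : (a^2 + ρ^2*b^2)^(p/2) ≤ (|a+b|^p + |a-b|^p)/2 := by
    have := scaled hp1 hp2 (abs_nonneg a) (abs_nonneg b)
    rw [habs]
    have e : a^2 + ρ^2*b^2 = |a|^2 + (p-1)*|b|^2 := by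
      rw [sq_abs, sq_abs, hp]; ring
    rw [e]
    exact this
  have hX : (0:ℝ) ≤ a^2 + ρ^2*b^2 := by positivity
  calc a^2 + ρ^2*b^2 = ((a^2 + ρ^2*b^2)^(p/2))^(2/p) := by
        rw [← Real.rpow_mul hX, show p/2*(2/p) = 1 from by field_simp, Real.rpow_one]
    _ ≤ ((|a+b|^p + |a-b|^p)/2)^(2/p) := by
        apply Real.rpow_le_rpow (Real.rpow_nonneg hX _) hmain (by positivity)

end TP

namespace HY
open HC Real

noncomputable def Tker {n : ℕ} (ρ : ℝ) (g : (Fin n → Bool) → ℝ) : (Fin n → Bool) → ℝ :=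
  fun x => expectation (fun y => (∏ j, (1 + ρ * bsign (x j) * bsign (y j))) * g y)

lemma Tker_apply {n : ℕ} (ρ : ℝ) (g : (Fin n → Bool) → ℝ) (x : Fin n → Bool) :
    Tker ρ g x = expectation (fun y => (∏ j, (1 + ρ * bsign (x j) * bsign (y j))) * g y) := rfl

lemma expectation_add {n : ℕ} (f g : (Fin n → Bool) → ℝ) :
    expectation (fun x => f x + g x) = expectation f + expectation g := by
  unfold expectation
  rw [Finset.sum_add_distrib, add_div]

lemma expectation_div {n : ℕ} (f : (Fin n → Bool) → ℝ) (c : ℝ) :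
    expectation (fun x => f x / c) = expectation f / c := by
  unfold expectation
  rw [← Finset.sum_div, div_div, div_div, mul_comm]

lemma Tker_fourier {n : ℕ} (ρ : ℝ) (g : (Fin n → Bool) → ℝ) (x : Fin n → Bool) :
    Tker ρ g x = ∑ S : Finset (Fin n), ρ ^ S.card * fwCoeff g S * walsh S x := by
  unfold Tker
  have e : (fun y => (∏ j, (1 + ρ * bsign (x j) * bsign (y j))) * g y)
      = fun y => ∑ S : Finset (Fin n), (ρ ^ S.card * walsh S x) * (g y * walsh S y) := by
    funext y
    rw [kernel_expansion, Finset.sum_mul]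
    apply Finset.sum_congr rfl
    intro S _
    ring
  rw [e, expectation_sum]
  apply Finset.sum_congr rfl
  intro S _
  rw [expectation_const_mul (ρ ^ S.card * walsh S x) (fun y => g y * walsh S y), ← fwCoeff]
  ring

lemma expectation_unique (f : (Fin 0 → Bool) → ℝ) (x₀ : Fin 0 → Bool) :
    expectation f = f x₀ := by
  unfold expectation
  rw [show (∑ x : Fin 0 → Bool, f x) = f x₀ from ?_]
  · norm_num
  · rw [Fintype.sum_unique (f := f)]
    congr 1
    exact Subsingleton.elim _ _

lemma sum_split {n : ℕ} (F : (Fin (n+1) → Bool) → ℝ) :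
    ∑ x : Fin (n+1) → Bool, F x
      = ∑ y : Fin n → Bool, (F (Fin.cons true y) + F (Fin.cons false y)) := by
  rw [← (Fin.consEquiv (fun _ : Fin (n+1) => Bool)).sum_comp F, Fintype.sum_prod_type,
    Fintype.sum_bool, ← Finset.sum_add_distrib]
  apply Finset.sum_congr rfl
  intro y _
  rfl

lemma expectation_split {n : ℕ} (F : (Fin (n+1) → Bool) → ℝ) :
    expectation F = (expectation (fun y => F (Fin.cons true y))
      + expectation (fun y => F (Fin.cons false y)))/2 := by
  unfold expectation
  rw [sum_split, Finset.sum_add_distrib, pow_succ]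
  field_simp

lemma Tker_cons {n : ℕ} (ρ : ℝ) (g : (Fin (n+1) → Bool) → ℝ) (a : Bool) (x : Fin n → Bool) :
    Tker ρ g (Fin.cons a x)
      = ((1 + ρ * bsign a * bsign true) * Tker ρ (fun y => g (Fin.cons true y)) x
        + (1 + ρ * bsign a * bsign false) * Tker ρ (fun y => g (Fin.cons false y)) x)/2 := by
  have branch : ∀ b : Bool,
      expectation (fun y : Fin n → Bool =>
        (∏ j : Fin (n+1), (1 + ρ * bsign ((Fin.cons a x : Fin (n+1) → Bool) j)
          * bsign ((Fin.cons b y : Fin (n+1) → Bool) j)))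
        * g (Fin.cons b y))
      = (1 + ρ * bsign a * bsign b) * Tker ρ (fun y => g (Fin.cons b y)) x := by
    intro b
    have hT : Tker ρ (fun y => g (Fin.cons b y)) x
        = expectation (fun y : Fin n → Bool => (∏ j, (1 + ρ * bsign (x j) * bsign (y j)))
            * g (Fin.cons b y)) := rfl
    rw [hT, ← expectation_const_mul]
    congr 1
    funext y
    rw [Fin.prod_univ_succ]
    simp only [Fin.cons_zero, Fin.cons_succ]
    ring
  rw [Tker_apply ρ g (Fin.cons a x), expectation_split]
  simp only [branch]

theorem hyper : ∀ (n : ℕ) (g : (Fin n → Bool) → ℝ) (ρ : ℝ), 0 ≤ ρ → ρ ≤ 1 →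
    expectation (fun x => (Tker ρ g x)^2)
      ≤ (expectation (fun x => |g x| ^ (1+ρ^2)))^(2/(1+ρ^2)) := by
  intro n
  induction n with
  | zero =>
    intro g ρ hρ0 hρ1
    have hp0 : (0:ℝ) < 1 + ρ^2 := by positivity
    have hT : ∀ x : Fin 0 → Bool, Tker ρ g x = g x := by
      intro x
      have h1 : Tker ρ g x = expectation (fun y : Fin 0 → Bool =>
          (∏ j, (1 + ρ * bsign (x j) * bsign (y j))) * g y) := rfl
      have h2 : (fun y : Fin 0 → Bool => (∏ j, (1 + ρ * bsign (x j) * bsign (y j))) * g y)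
          = fun y => g y := by
        funext y
        rw [show (Finset.univ : Finset (Fin 0)) = ∅ from Finset.univ_eq_empty,
          Finset.prod_empty, one_mul]
      rw [h1, h2, expectation_unique g x]
    rw [expectation_unique (fun x => (Tker ρ g x)^2) (fun i => i.elim0),
      expectation_unique (fun x => |g x| ^ (1+ρ^2)) (fun i => i.elim0)]
    rw [hT (fun i => i.elim0)]
    have h1 : ((1+ρ^2) * (2/(1+ρ^2))) = ((2:ℕ):ℝ) := by
      push_cast
      field_simp
    rw [← Real.rpow_mul (abs_nonneg _), h1, Real.rpow_natCast, sq_abs]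
  | succ n ih =>
    intro g ρ hρ0 hρ1
    set p := 1 + ρ^2 with hpdef
    have hp1 : 1 ≤ p := by nlinarith [sq_nonneg ρ]
    have hp2 : p ≤ 2 := by nlinarith
    have hppos : (0:ℝ) < p := by linarith
    set r := 2/p with hrdef
    have hr1 : 1 ≤ r := by rw [hrdef, le_div_iff₀ hppos]; linarith
    have hrpos : (0:ℝ) < r := by linarith
    set gT := fun y : Fin n → Bool => g (Fin.cons true y) with hgT
    set gF := fun y : Fin n → Bool => g (Fin.cons false y) with hgF
    set u := Tker ρ gT with hu
    set v := Tker ρ gF with hv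
    have hbT : bsign true = 1 := rfl
    have hbF : bsign false = -1 := rfl
    -- Step 1
    have step1 : expectation (fun x => (Tker ρ g x)^2)
        = expectation (fun x : Fin n → Bool =>
            ((u x + v x)/2)^2 + ρ^2*((u x - v x)/2)^2) := by
      rw [expectation_split (fun x => (Tker ρ g x)^2)]
      have eT : (fun x : Fin n → Bool => (Tker ρ g (Fin.cons true x))^2)
          = fun x => ((u x + v x)/2 + ρ*((u x - v x)/2))^2 := by
        funext x
        rw [Tker_cons, ← hgT, ← hgF, ← hu, ← hv, hbT, hbF]
        ring
      have eF : (fun x : Fin n → Bool => (Tker ρ g (Fin.cons false x))^2)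
          = fun x => ((u x + v x)/2 - ρ*((u x - v x)/2))^2 := by
        funext x
        rw [Tker_cons, ← hgT, ← hgF, ← hu, ← hv, hbT, hbF]
        ring
      rw [eT, eF, ← expectation_add]
      rw [show (fun x : Fin n → Bool => ((u x + v x)/2 + ρ*((u x - v x)/2))^2
          + ((u x + v x)/2 - ρ*((u x - v x)/2))^2)
        = fun x => (((u x + v x)/2)^2 + ρ^2*((u x - v x)/2)^2) * 2 from ?_]
      · rw [expectation_mul_const]
        field_simp
      · funext x
        ring
    -- Step 2: pointwise two-point inequality
    have step2 : expectation (fun x : Fin n → Bool =>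
            ((u x + v x)/2)^2 + ρ^2*((u x - v x)/2)^2)
        ≤ expectation (fun x : Fin n → Bool => ((|u x|^p + |v x|^p)/2)^r) := by
      apply expectation_mono
      intro x
      have h2p := TP.two_point hρ0 hρ1 ((u x + v x)/2) ((u x - v x)/2)
      rw [show (u x + v x)/2 + (u x - v x)/2 = u x from by ring,
        show (u x + v x)/2 - (u x - v x)/2 = v x from by ring] at h2p
      exact h2p
    -- Step 3: Minkowski + induction hypothesis
    have hET := ih gT ρ hρ0 hρ1
    have hEF := ih gF ρ hρ0 hρ1
    rw [← hpdef, ← hrdef, ← hu] at hET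
    rw [← hpdef, ← hrdef, ← hv] at hEF
    set EgT := expectation (fun y : Fin n → Bool => |gT y| ^ p) with hEgT
    set EgF := expectation (fun y : Fin n → Bool => |gF y| ^ p) with hEgF
    have hFnn : ∀ x : Fin n → Bool, (0:ℝ) ≤ |u x| ^ p :=
      fun x => Real.rpow_nonneg (abs_nonneg _) _
    have hGnn : ∀ x : Fin n → Bool, (0:ℝ) ≤ |v x| ^ p :=
      fun x => Real.rpow_nonneg (abs_nonneg _) _
    have hN : (0:ℝ) < 2^n := by positivity
    have hgTnn : (0:ℝ) ≤ EgT :=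
      expectation_nonneg (fun x => Real.rpow_nonneg (abs_nonneg _) _)
    have hgFnn : (0:ℝ) ≤ EgF :=
      expectation_nonneg (fun x => Real.rpow_nonneg (abs_nonneg _) _)
    have hpr2 : p * r = ((2:ℕ):ℝ) := by
      rw [hrdef]
      push_cast
      rw [mul_comm, div_mul_cancel₀ _ (ne_of_gt hppos)]
    have hrr : r * (1/r) = 1 := mul_one_div_cancel (ne_of_gt hrpos)
    have hrr' : (1/r) * r = 1 := one_div_mul_cancel (ne_of_gt hrpos)
    -- Minkowski
    have hMink := Real.Lp_add_le (s := Finset.univ)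
      (f := fun x : Fin n → Bool => |u x| ^ p)
      (g := fun x : Fin n → Bool => |v x| ^ p) hr1
    have e1 : ∀ x : Fin n → Bool, |(|u x| ^ p + |v x| ^ p)| = |u x| ^ p + |v x| ^ p :=
      fun x => abs_of_nonneg (add_nonneg (hFnn x) (hGnn x))
    have e2 : ∀ x : Fin n → Bool, |(|u x| ^ p)| = |u x| ^ p := fun x => abs_of_nonneg (hFnn x)
    have e3 : ∀ x : Fin n → Bool, |(|v x| ^ p)| = |v x| ^ p := fun x => abs_of_nonneg (hGnn x)
    simp only [e1, e2, e3] at hMink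
    -- per-summand
    have hFr : ∀ x : Fin n → Bool, (|u x| ^ p) ^ r = (u x)^2 := by
      intro x
      rw [← Real.rpow_mul (abs_nonneg (u x)), hpr2, Real.rpow_natCast, sq_abs]
    have hGr : ∀ x : Fin n → Bool, (|v x| ^ p) ^ r = (v x)^2 := by
      intro x
      rw [← Real.rpow_mul (abs_nonneg (v x)), hpr2, Real.rpow_natCast, sq_abs]
    have hEu2nn : (0:ℝ) ≤ expectation (fun x : Fin n → Bool => (u x)^2) :=
      expectation_nonneg (fun x => sq_nonneg _)
    have hEv2nn : (0:ℝ) ≤ expectation (fun x : Fin n → Bool => (v x)^2) :=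
      expectation_nonneg (fun x => sq_nonneg _)
    have hSF : ∑ x : Fin n → Bool, (|u x| ^ p) ^ r
        = 2^n * expectation (fun x : Fin n → Bool => (u x)^2) := by
      rw [Finset.sum_congr rfl fun x _ => hFr x]
      have : expectation (fun x : Fin n → Bool => (u x)^2)
          = (∑ x : Fin n → Bool, (u x)^2)/2^n := rfl
      rw [this, mul_div_cancel₀ _ (ne_of_gt hN)]
    have hSG : ∑ x : Fin n → Bool, (|v x| ^ p) ^ r
        = 2^n * expectation (fun x : Fin n → Bool => (v x)^2) := by
      rw [Finset.sum_congr rfl fun x _ => hGr x]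
      have : expectation (fun x : Fin n → Bool => (v x)^2)
          = (∑ x : Fin n → Bool, (v x)^2)/2^n := rfl
      rw [this, mul_div_cancel₀ _ (ne_of_gt hN)]
    have hracT : (expectation (fun x : Fin n → Bool => (u x)^2)) ^ (1/r) ≤ EgT := by
      calc (expectation (fun x : Fin n → Bool => (u x)^2)) ^ (1/r)
          ≤ (EgT ^ r) ^ (1/r) := Real.rpow_le_rpow hEu2nn hET (by positivity)
        _ = EgT := by rw [← Real.rpow_mul hgTnn, hrr, Real.rpow_one]
    have hracF : (expectation (fun x : Fin n → Bool => (v x)^2)) ^ (1/r) ≤ EgF := by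
      calc (expectation (fun x : Fin n → Bool => (v x)^2)) ^ (1/r)
          ≤ (EgF ^ r) ^ (1/r) := Real.rpow_le_rpow hEv2nn hEF (by positivity)
        _ = EgF := by rw [← Real.rpow_mul hgFnn, hrr, Real.rpow_one]
    have hbound1 : (∑ x : Fin n → Bool, (|u x| ^ p) ^ r) ^ (1/r) ≤ ((2:ℝ)^n)^(1/r) * EgT := by
      rw [hSF, Real.mul_rpow hN.le hEu2nn]
      exact mul_le_mul_of_nonneg_left hracT (Real.rpow_nonneg hN.le _)
    have hbound2 : (∑ x : Fin n → Bool, (|v x| ^ p) ^ r) ^ (1/r) ≤ ((2:ℝ)^n)^(1/r) * EgF := by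
      rw [hSG, Real.mul_rpow hN.le hEv2nn]
      exact mul_le_mul_of_nonneg_left hracF (Real.rpow_nonneg hN.le _)
    have hsumnn : (0:ℝ) ≤ ∑ x : Fin n → Bool, (|u x| ^ p + |v x| ^ p) ^ r :=
      Finset.sum_nonneg fun x _ => Real.rpow_nonneg (add_nonneg (hFnn x) (hGnn x)) _
    have hup2 : (∑ x : Fin n → Bool, (|u x| ^ p + |v x| ^ p) ^ r) ^ (1/r)
        ≤ ((2:ℝ)^n)^(1/r) * (EgT + EgF) := by
      rw [mul_add]
      exact le_trans hMink (add_le_add hbound1 hbound2)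
    have htot : ∑ x : Fin n → Bool, (|u x| ^ p + |v x| ^ p) ^ r
        ≤ 2^n * (EgT + EgF)^r := by
      calc ∑ x : Fin n → Bool, (|u x| ^ p + |v x| ^ p) ^ r
          = ((∑ x : Fin n → Bool, (|u x| ^ p + |v x| ^ p) ^ r)^(1/r))^r := by
            rw [← Real.rpow_mul hsumnn, hrr', Real.rpow_one]
        _ ≤ (((2:ℝ)^n)^(1/r) * (EgT + EgF))^r :=
            Real.rpow_le_rpow (Real.rpow_nonneg hsumnn _) hup2 hrpos.le
        _ = 2^n * (EgT + EgF)^r := by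
            rw [Real.mul_rpow (Real.rpow_nonneg hN.le _) (add_nonneg hgTnn hgFnn),
              ← Real.rpow_mul hN.le, hrr', Real.rpow_one]
    have step3 : expectation (fun x : Fin n → Bool => ((|u x|^p + |v x|^p)/2)^r)
        ≤ (expectation (fun x : Fin (n+1) → Bool => |g x| ^ p))^r := by
      have hsplitg : expectation (fun x : Fin (n+1) → Bool => |g x| ^ p) = (EgT + EgF)/2 := by
        rw [expectation_split (fun x : Fin (n+1) → Bool => |g x| ^ p), hEgT, hEgF]
      rw [hsplitg]
      have e : (fun x : Fin n → Bool => ((|u x|^p + |v x|^p)/2)^r)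
          = fun x : Fin n → Bool => ((|u x|^p + |v x|^p))^r / (2:ℝ)^r := by
        funext x
        rw [Real.div_rpow (add_nonneg (hFnn x) (hGnn x)) (by norm_num : (0:ℝ) ≤ 2)]
      rw [e, expectation_div, Real.div_rpow (add_nonneg hgTnn hgFnn) (by norm_num : (0:ℝ) ≤ 2)]
      have hEw : expectation (fun x : Fin n → Bool => (|u x|^p + |v x|^p)^r)
          = (∑ x : Fin n → Bool, (|u x|^p + |v x|^p)^r)/2^n := rfl
      rw [hEw]
      have h2r : (0:ℝ) < (2:ℝ)^r := Real.rpow_pos_of_pos (by norm_num) r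
      have hstep : (∑ x : Fin n → Bool, (|u x|^p + |v x|^p)^r)/2^n ≤ (EgT + EgF)^r := by
        rw [div_le_iff₀ hN]
        calc ∑ x : Fin n → Bool, (|u x| ^ p + |v x| ^ p) ^ r ≤ 2^n * (EgT + EgF)^r := htot
          _ = (EgT + EgF)^r * 2^n := by ring
      exact div_le_div_of_nonneg_right hstep h2r.le
    calc expectation (fun x => (Tker ρ g x)^2)
        = expectation (fun x : Fin n → Bool =>
            ((u x + v x)/2)^2 + ρ^2*((u x - v x)/2)^2) := step1
      _ ≤ expectation (fun x : Fin n → Bool => ((|u x|^p + |v x|^p)/2)^r) := step2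
      _ ≤ (expectation (fun x : Fin (n+1) → Bool => |g x| ^ p))^r := step3

end HY
namespace FIN
open HC HY Real Set MeasureTheory Filter

variable {n : ℕ}

lemma heat_eq_Tker (t : ℝ) (g : (Fin n → Bool) → ℝ) (x : Fin n → Bool) :
    heat t g x = Tker (Real.exp (-t)) g x := by
  rw [Tker_fourier, heat]
  apply Finset.sum_congr rfl
  intro S _
  congr 2
  rw [show (-(S.card:ℝ))*t = (S.card:ℝ)*(-t) from by ring, Real.exp_nat_mul]

lemma norm2sq_heat_le (g : (Fin n → Bool) → ℝ) (t : ℝ) (ht : 0 ≤ t) :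
    norm2sq (heat t g)
      ≤ (expectation (fun x => |g x| ^ (1 + Real.exp (-(2*t)))))
          ^ (2/(1 + Real.exp (-(2*t)))) := by
  have h1 : norm2sq (heat t g) = expectation (fun x => (Tker (Real.exp (-t)) g x)^2) := by
    unfold norm2sq
    congr 1
    funext x
    rw [heat_eq_Tker]
  rw [h1]
  have h2 := hyper n g (Real.exp (-t)) (Real.exp_pos _).le
    (Real.exp_le_one_iff.mpr (by linarith))
  have hsq : Real.exp (-t) ^ 2 = Real.exp (-(2*t)) := by
    rw [show (-(2*t)) = ((2:ℕ):ℝ) * (-t) from by push_cast; ring, Real.exp_nat_mul]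
  rw [hsq] at h2
  exact h2

lemma granular {g : (Fin n → Bool) → ℝ} {D : ℝ} (hD : 1 ≤ D)
    (hval : ∀ x, g x = 0 ∨ D⁻¹ ≤ |g x|) {p : ℝ} (hp1 : 1 ≤ p) (hp2 : p ≤ 2) :
    expectation (fun x => |g x| ^ p) ≤ D^(2 - p) * norm2sq g := by
  have hDpos : (0:ℝ) < D := by linarith
  have key : ∀ x, |g x| ^ p ≤ D^(2-p) * g x ^ 2 := by
    intro x
    rcases hval x with h0 | hge
    · rw [h0]
      rw [abs_zero, Real.zero_rpow (by linarith : p ≠ 0)]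
      positivity
    · have hpos : 0 < |g x| := lt_of_lt_of_le (by positivity) hge
      have e : |g x| ^ p = |g x| ^ (2:ℝ) * |g x| ^ (p - 2) := by
        rw [← Real.rpow_add hpos]
        congr 1
        ring
      have h1 : |g x| ^ (p-2) ≤ (D⁻¹) ^ (p-2) :=
        Real.rpow_le_rpow_of_nonpos (by positivity) hge (by linarith)
      have h2 : (D⁻¹ : ℝ) ^ (p-2) = D ^ (2-p) := by
        rw [Real.inv_rpow hDpos.le, ← Real.rpow_neg hDpos.le]
        congr 1
        ring
      have h3 : |g x| ^ (2:ℝ) = g x ^2 := by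
        rw [show (2:ℝ) = ((2:ℕ):ℝ) from by norm_num, Real.rpow_natCast, sq_abs]
      calc |g x| ^ p = |g x| ^ (2:ℝ) * |g x| ^ (p-2) := e
        _ ≤ |g x| ^ (2:ℝ) * D^(2-p) := by
            apply mul_le_mul_of_nonneg_left _ (Real.rpow_nonneg (abs_nonneg _) _)
            rw [← h2]
            exact h1
        _ = D^(2-p) * g x ^ 2 := by rw [h3]; ring
  calc expectation (fun x => |g x|^p) ≤ expectation (fun x => D^(2-p) * (g x)^2) :=
        expectation_mono key
    _ = D^(2-p) * norm2sq g := expectation_const_mul _ _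

/-- the substitution function `tanh t`. -/
noncomputable def vf (t : ℝ) : ℝ := (1 - Real.exp (-(2*t)))/(1 + Real.exp (-(2*t)))

lemma w_pos (t : ℝ) : 0 < Real.exp (-(2*t)) := Real.exp_pos _

lemma w_lt_one {t : ℝ} (ht : 0 < t) : Real.exp (-(2*t)) < 1 :=
  Real.exp_lt_one_iff.mpr (by linarith)

lemma vf_mem {t : ℝ} (ht : 0 < t) : 0 < vf t ∧ vf t < 1 := by
  have h1 := w_pos t
  have h2 := w_lt_one ht
  unfold vf
  constructor
  · apply div_pos (by linarith) (by linarith)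
  · rw [div_lt_one (by linarith)]
    linarith

lemma vf_hasDerivAt (t : ℝ) : HasDerivAt vf (1 - vf t ^ 2) t := by
  have hw : HasDerivAt (fun t : ℝ => Real.exp (-(2*t))) (Real.exp (-(2*t)) * (-2)) t := by
    have hlin : HasDerivAt (fun t : ℝ => -(2*t)) (-2) t := by
      simpa using ((hasDerivAt_id t).const_mul (-2 : ℝ))
    simpa using hlin.exp
  have hnum : HasDerivAt (fun t : ℝ => 1 - Real.exp (-(2*t)))
      (-(Real.exp (-(2*t)) * (-2))) t := hw.const_sub 1
  have hden : HasDerivAt (fun t : ℝ => 1 + Real.exp (-(2*t)))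
      (Real.exp (-(2*t)) * (-2)) t := hw.const_add 1
  have hd0 : (1 + Real.exp (-(2*t))) ≠ 0 := by
    have := w_pos t
    positivity
  have hdd := hnum.div hden hd0
  have : (-(Real.exp (-(2*t)) * (-2)) * (1 + Real.exp (-(2*t)))
        - (1 - Real.exp (-(2*t))) * (Real.exp (-(2*t)) * (-2)))
        / (1 + Real.exp (-(2*t)))^2 = 1 - vf t ^ 2 := by
    unfold vf
    have := w_pos t
    field_simp
    ring
  rw [this] at hdd
  exact hdd

lemma vf_deriv_pos {t : ℝ} (ht : 0 < t) : 0 < 1 - vf t ^ 2 := by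
  obtain ⟨h1, h2⟩ := vf_mem ht
  nlinarith

lemma vf_strictMono : StrictMonoOn vf (Ioi (0:ℝ)) := by
  apply strictMonoOn_of_deriv_pos (convex_Ioi 0)
  · intro x _
    exact (vf_hasDerivAt x).continuousAt.continuousWithinAt
  · intro x hx
    rw [interior_Ioi] at hx
    rw [(vf_hasDerivAt x).deriv]
    exact vf_deriv_pos hx

lemma key4 {v : ℝ} (hv0 : 0 ≤ v) (hv1 : v ≤ 1) : (4:ℝ)^v ≤ 2*(1+v) := by
  have h := convexOn_exp.2 (Set.mem_univ (0:ℝ)) (Set.mem_univ (Real.log 4))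
    (by linarith : (0:ℝ) ≤ 1 - v) (by linarith : (0:ℝ) ≤ v) (by ring)
  simp only [smul_eq_mul, mul_zero, zero_add, Real.exp_zero, mul_one] at h
  rw [Real.exp_log (by norm_num : (0:ℝ) < 4)] at h
  have h4v : (4:ℝ)^v = Real.exp (Real.log 4 * v) :=
    Real.rpow_def_of_pos (by norm_num) v
  rw [h4v, mul_comm (Real.log 4) v]
  calc Real.exp (v * Real.log 4) ≤ (1-v) + v*4 := h
    _ ≤ 2*(1+v) := by linarith

lemma core_ineq (k e : ℕ) (hke : k ≤ e) {v : ℝ} (hv0 : 0 < v) (hv1 : v < 1) :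
    (2:ℝ)^k * ((2:ℝ)^e)^(2*v) ≤ 4^e * (1+v)^(k+2) := by
  have hre : ((2:ℝ)^e)^(2*v) = ((4:ℝ)^e)^v := by
    rw [← Real.rpow_natCast (2:ℝ) e, ← Real.rpow_natCast (4:ℝ) e,
      ← Real.rpow_mul (by norm_num : (0:ℝ) ≤ 2), ← Real.rpow_mul (by norm_num : (0:ℝ) ≤ 4),
      show (4:ℝ) = (2:ℝ)^(2:ℕ) from by norm_num, ← Real.rpow_natCast (2:ℝ) 2,
      ← Real.rpow_mul (by norm_num : (0:ℝ) ≤ 2)]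
    congr 1
    push_cast
    ring
  rw [hre]
  -- key chain
  have hbase : (2:ℝ) ≤ (4:ℝ)^(1-v) * (1+v) := by
    have h4v := key4 hv0.le hv1.le
    have h4vpos : (0:ℝ) < (4:ℝ)^v := Real.rpow_pos_of_pos (by norm_num) _
    have he : (4:ℝ)^(1-v) = 4 / (4:ℝ)^v := by
      rw [show (1:ℝ)-v = 1 + (-v) from by ring, Real.rpow_add (by norm_num : (0:ℝ) < 4),
        Real.rpow_one, Real.rpow_neg (by norm_num : (0:ℝ) ≤ 4)]
      ring
    rw [he, div_mul_eq_mul_div, le_div_iff₀ h4vpos]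
    nlinarith
  have step1 : (2:ℝ)^k ≤ ((4:ℝ)^(1-v) * (1+v))^k :=
    pow_le_pow_left₀ (by norm_num) hbase k
  have step2 : ((4:ℝ)^(1-v) * (1+v))^k = ((4:ℝ)^k)^(1-v) * (1+v)^k := by
    rw [mul_pow]
    congr 1
    rw [← Real.rpow_natCast ((4:ℝ)^(1-v)) k, ← Real.rpow_mul (by positivity),
      ← Real.rpow_natCast (4:ℝ) k, ← Real.rpow_mul (by norm_num : (0:ℝ) ≤ 4)]
    congr 1
    ring
  have step3 : ((4:ℝ)^k)^(1-v) * (1+v)^k ≤ ((4:ℝ)^e)^(1-v) * (1+v)^(k+2) := by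
    apply mul_le_mul
    · exact Real.rpow_le_rpow (by positivity)
        (pow_le_pow_right₀ (by norm_num : (1:ℝ) ≤ 4) hke) (by linarith)
    · exact pow_le_pow_right₀ (by linarith) (by omega)
    · positivity
    · positivity
  calc (2:ℝ)^k * ((4:ℝ)^e)^v ≤ (((4:ℝ)^e)^(1-v) * (1+v)^(k+2)) * ((4:ℝ)^e)^v := by
        apply mul_le_mul_of_nonneg_right _ (by positivity)
        calc (2:ℝ)^k ≤ ((4:ℝ)^(1-v) * (1+v))^k := step1
          _ = ((4:ℝ)^k)^(1-v) * (1+v)^k := step2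
          _ ≤ ((4:ℝ)^e)^(1-v) * (1+v)^(k+2) := step3
    _ = 4^e * (1+v)^(k+2) := by
        rw [show (((4:ℝ)^e)^(1-v) * (1+v)^(k+2)) * ((4:ℝ)^e)^v
            = (((4:ℝ)^e)^(1-v) * ((4:ℝ)^e)^v) * (1+v)^(k+2) from by ring,
          ← Real.rpow_add (by positivity : (0:ℝ) < (4:ℝ)^e),
          show (1-v) + v = 1 from by ring, Real.rpow_one]

end FIN

namespace FIN2
open HC HY FIN Real Set MeasureTheory Filter

variable {n : ℕ}

lemma pointwise_bound (k e : ℕ) (hke : k ≤ e) (g : (Fin n → Bool) → ℝ)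
    (hval : ∀ x, g x = 0 ∨ ((2:ℝ)^e)⁻¹ ≤ |g x|)
    (hα0 : 0 < norm2sq g) (hα1 : norm2sq g < 1) {t : ℝ} (ht : 0 < t) :
    (Real.exp (2*t) - 1)^k * Real.exp (-(2*((k:ℝ)+1))*t) * norm2sq (heat t g)
      ≤ 4^e * norm2sq g *
        ((vf t)^k * Real.exp (-(Real.log (1/norm2sq g) * vf t)) * (1 - vf t^2)) := by
  set α := norm2sq g with hα
  set L := Real.log (1/α) with hLdef
  set w := Real.exp (-(2*t)) with hwdef
  set v := vf t with hvdef
  have hw0 : 0 < w := Real.exp_pos _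
  have hw1 : w < 1 := w_lt_one ht
  have hv0 : 0 < v := (vf_mem ht).1
  have hv1 : v < 1 := (vf_mem ht).2
  have h1w : (0:ℝ) < 1 + w := by linarith
  have h1v : (0:ℝ) < 1 + v := by linarith
  have hvw : v = (1-w)/(1+w) := rfl
  have hwv : w = (1-v)/(1+v) := by
    rw [hvw]
    field_simp
    ring
  set p := 1 + w with hpdef
  have hp1 : 1 ≤ p := by rw [hpdef]; linarith
  have hp2 : p ≤ 2 := by rw [hpdef]; linarith
  have hppos : (0:ℝ) < p := by linarith
  have hD1 : (1:ℝ) ≤ 2^e := by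
    have := pow_le_pow_left₀ (by norm_num : (0:ℝ) ≤ 1) (by norm_num : (1:ℝ) ≤ 2) e
    simpa using this
  have hHC := norm2sq_heat_le g t ht.le
  rw [← hwdef, ← hpdef] at hHC
  have hGR := granular hD1 hval hp1 hp2
  rw [← hα] at hGR
  have hEnn : 0 ≤ expectation (fun x => |g x|^p) :=
    expectation_nonneg (fun x => Real.rpow_nonneg (abs_nonneg _) _)
  have hΦ : norm2sq (heat t g) ≤ (((2:ℝ)^e)^(2-p) * α)^(2/p) :=
    le_trans hHC (Real.rpow_le_rpow hEnn hGR (by positivity))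
  have h2p : 2/p = 1 + v := by
    rw [hpdef, hvw]
    field_simp
    ring
  have hsplit : (((2:ℝ)^e)^(2-p) * α)^(2/p)
      = ((2:ℝ)^e)^(2*v) * (α * Real.exp (-(L*v))) := by
    rw [Real.mul_rpow (by positivity) hα0.le,
      ← Real.rpow_mul (by positivity : (0:ℝ) ≤ (2:ℝ)^e)]
    congr 1
    · congr 1
      rw [hpdef, hvw]
      field_simp
      ring
    · rw [h2p, Real.rpow_add hα0, Real.rpow_one]
      congr 1
      rw [Real.rpow_def_of_pos hα0]
      congr 1
      rw [hLdef, one_div, Real.log_inv]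
      ring
  have hEw : Real.exp (2*t) * w = 1 := by
    rw [hwdef, ← Real.exp_add, show 2*t + -(2*t) = 0 from by ring, Real.exp_zero]
  have hpre : (Real.exp (2*t) - 1)^k * Real.exp (-(2*((k:ℝ)+1))*t) = (1-w)^k * w := by
    have hwk : Real.exp (-(2*((k:ℝ)+1))*t) = w^(k+1) := by
      rw [hwdef, ← Real.exp_nat_mul]
      congr 1
      push_cast
      ring
    rw [hwk, pow_succ, show (Real.exp (2*t) - 1)^k * (w^k * w)
        = ((Real.exp (2*t) - 1) * w)^k * w from by rw [mul_pow]; ring]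
    congr 2
    rw [sub_mul, hEw, one_mul]
  have hcore : (1-w)^k * w * ((2:ℝ)^e)^(2*v) ≤ 4^e * (v^k * (1 - v^2)) := by
    have hci := core_ineq k e hke hv0 hv1
    have e1 : 1 - w = 2*v/(1+v) := by
      rw [hwv]
      field_simp
      ring
    have hposk : (0:ℝ) < (1+v)^(k+1) := by positivity
    have hD2v : (0:ℝ) ≤ ((2:ℝ)^e)^(2*v) := Real.rpow_nonneg (by positivity) _
    have eL : (1-w)^k * w * ((2:ℝ)^e)^(2*v)
        = (v^k*(1-v)) * ((2:ℝ)^k * ((2:ℝ)^e)^(2*v)) / (1+v)^(k+1) := by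
      rw [e1, hwv, div_pow]
      rw [pow_succ]
      field_simp
      ring
    have eR : (v^k*(1-v)) * ((4:ℝ)^e * (1+v)^(k+2)) / (1+v)^(k+1)
        = 4^e * (v^k * (1 - v^2)) := by
      rw [show (k+2) = (k+1)+1 from by ring, pow_succ]
      field_simp
      ring
    rw [eL, ← eR]
    apply div_le_div_of_nonneg_right _ hposk.le
    apply mul_le_mul_of_nonneg_left hci
    have : (0:ℝ) ≤ v^k := by positivity
    nlinarith
  have hprenn : (0:ℝ) ≤ (1-w)^k * w :=
    mul_nonneg (pow_nonneg (by linarith) k) hw0.le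
  calc (Real.exp (2*t) - 1)^k * Real.exp (-(2*((k:ℝ)+1))*t) * norm2sq (heat t g)
      = (1-w)^k * w * norm2sq (heat t g) := by rw [hpre]
    _ ≤ (1-w)^k * w * (((2:ℝ)^e)^(2*v) * (α * Real.exp (-(L*v)))) := by
        apply mul_le_mul_of_nonneg_left _ hprenn
        rw [← hsplit]
        exact hΦ
    _ = ((1-w)^k * w * ((2:ℝ)^e)^(2*v)) * (α * Real.exp (-(L*v))) := by ring
    _ ≤ (4^e * (v^k * (1 - v^2))) * (α * Real.exp (-(L*v))) := by
        apply mul_le_mul_of_nonneg_right hcore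
        positivity
    _ = 4^e * α * (v^k * Real.exp (-(L*v)) * (1 - v^2)) := by ring

lemma integral_bound (k : ℕ) {L : ℝ} (hL : 0 < L) :
    IntegrableOn (fun s => s^k * Real.exp (-(L*s))) (Ioi (0:ℝ)) ∧
    ∫ s in Ioi (0:ℝ), s^k * Real.exp (-(L*s)) = k.factorial / L^(k+1) := by
  have hfun : (fun s : ℝ => s^((k:ℕ):ℝ) * Real.exp (-L * s^((1:ℝ))))
      = fun s => s^k * Real.exp (-(L*s)) := by
    funext s
    rw [Real.rpow_natCast, Real.rpow_one, neg_mul]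
  have hq : (-1:ℝ) < (k:ℝ) := by
    have : (0:ℝ) ≤ (k:ℝ) := Nat.cast_nonneg k
    linarith
  constructor
  · have := integrableOn_rpow_mul_exp_neg_mul_rpow hq one_pos hL
    rwa [hfun] at this
  · have := integral_rpow_mul_exp_neg_mul_rpow one_pos hq hL
    rw [hfun] at this
    rw [this]
    simp only [div_one]
    rw [Real.Gamma_nat_eq_factorial k]
    rw [show (-((k:ℝ)+1)) = -(((k+1:ℕ)):ℝ) from by push_cast; ring,
      Real.rpow_neg hL.le, Real.rpow_natCast]
    field_simp

theorem main_integral (k e : ℕ) (hke : k ≤ e) (g : (Fin n → Bool) → ℝ)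
    (hval : ∀ x, g x = 0 ∨ ((2:ℝ)^e)⁻¹ ≤ |g x|)
    (hα0 : 0 < norm2sq g) (hα1 : norm2sq g < 1) :
    (∫ t in Ioi (0:ℝ),
        (Real.exp (2*t) - 1)^k * Real.exp (-(2*((k:ℝ)+1))*t) * norm2sq (heat t g))
      ≤ (k.factorial) * 4^e * norm2sq g / (Real.log (1/norm2sq g))^(k+1) := by
  set α := norm2sq g with hα
  set L := Real.log (1/α) with hL
  have hα11 : (1:ℝ) < 1/α := by
    rw [lt_div_iff₀ hα0, one_mul]
    exact hα1
  have hLpos : 0 < L := Real.log_pos hα11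
  set φ := fun s : ℝ => s^k * Real.exp (-(L*s)) with hφ
  obtain ⟨hφint, hφval⟩ := integral_bound k hLpos
  have hderiv : ∀ t ∈ Ioi (0:ℝ), HasDerivWithinAt vf (1 - vf t^2) (Ioi 0) t :=
    fun t _ => (vf_hasDerivAt t).hasDerivWithinAt
  have hinj : InjOn vf (Ioi 0) := vf_strictMono.injOn
  have hsub := integral_image_eq_integral_abs_deriv_smul measurableSet_Ioi hderiv hinj φ
  have himg : vf '' (Ioi 0) ⊆ Ioi (0:ℝ) := by
    rintro s ⟨t, ht, rfl⟩
    exact (vf_mem ht).1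
  have hφnn : ∀ s : ℝ, s ∈ Ioi (0:ℝ) → 0 ≤ φ s := by
    intro s hs
    rw [hφ]
    have : (0:ℝ) < s := hs
    positivity
  have himgint : IntegrableOn φ (vf '' Ioi 0) := hφint.mono_set himg
  have hIOI : ∫ s in vf '' Ioi 0, φ s ≤ ∫ s in Ioi (0:ℝ), φ s := by
    apply setIntegral_mono_set hφint
    · exact (ae_restrict_iff' measurableSet_Ioi).mpr (Filter.Eventually.of_forall hφnn)
    · exact HasSubset.Subset.eventuallyLE himg
  have hBint0 : IntegrableOn (fun t => |1 - vf t^2| • φ (vf t)) (Ioi (0:ℝ)) :=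
    (integrableOn_image_iff_integrableOn_abs_deriv_smul measurableSet_Ioi hderiv hinj φ).mp
      himgint
  set C := (4:ℝ)^e * α with hC
  have hBint : IntegrableOn (fun t => C * (|1 - vf t^2| • φ (vf t))) (Ioi (0:ℝ)) :=
    hBint0.const_mul C
  have hpt : ∀ t ∈ Ioi (0:ℝ),
      (Real.exp (2*t) - 1)^k * Real.exp (-(2*((k:ℝ)+1))*t) * norm2sq (heat t g)
        ≤ C * (|1 - vf t^2| • φ (vf t)) := by
    intro t ht
    have h := pointwise_bound k e hke g hval hα0 hα1 ht
    have habs : |1 - vf t^2| = 1 - vf t^2 := abs_of_pos (vf_deriv_pos ht)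
    rw [habs, smul_eq_mul, hC, hφ]
    calc (Real.exp (2*t) - 1)^k * Real.exp (-(2*((k:ℝ)+1))*t) * norm2sq (heat t g)
        ≤ 4^e * α * ((vf t)^k * Real.exp (-(L * vf t)) * (1 - vf t^2)) := h
      _ = 4^e * α * ((1 - vf t^2) * ((vf t)^k * Real.exp (-(L * vf t)))) := by ring
  have hnn : ∀ t ∈ Ioi (0:ℝ), 0 ≤
      (Real.exp (2*t) - 1)^k * Real.exp (-(2*((k:ℝ)+1))*t) * norm2sq (heat t g) := by
    intro t ht
    have h0t : (0:ℝ) < t := ht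
    have h1 : (0:ℝ) ≤ Real.exp (2*t) - 1 := by
      have := Real.one_le_exp (by linarith : (0:ℝ) ≤ 2*t)
      linarith
    have h2 : (0:ℝ) ≤ norm2sq (heat t g) := expectation_nonneg (fun x => sq_nonneg _)
    positivity
  have hcont : Continuous (fun t : ℝ =>
      (Real.exp (2*t) - 1)^k * Real.exp (-(2*((k:ℝ)+1))*t) * norm2sq (heat t g)) := by
    apply Continuous.mul
    · apply Continuous.mul
      · exact ((Real.continuous_exp.comp (continuous_const.mul continuous_id)).sub
          continuous_const).pow k
      · exact Real.continuous_exp.comp (continuous_const.mul continuous_id)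
    · unfold norm2sq expectation heat
      apply Continuous.div_const
      apply continuous_finset_sum
      intro x _
      apply Continuous.pow
      apply continuous_finset_sum
      intro S _
      exact ((Real.continuous_exp.comp (continuous_const.mul continuous_id)).mul
        continuous_const).mul continuous_const
  have hint : IntegrableOn (fun t : ℝ =>
      (Real.exp (2*t) - 1)^k * Real.exp (-(2*((k:ℝ)+1))*t) * norm2sq (heat t g))
      (Ioi (0:ℝ)) := by
    apply Integrable.mono' hBint hcont.aestronglyMeasurable
    apply (ae_restrict_iff' measurableSet_Ioi).mpr
    apply Filter.Eventually.of_forall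
    intro t ht
    rw [Real.norm_eq_abs, abs_of_nonneg (hnn t ht)]
    exact hpt t ht
  calc (∫ t in Ioi (0:ℝ),
        (Real.exp (2*t) - 1)^k * Real.exp (-(2*((k:ℝ)+1))*t) * norm2sq (heat t g))
      ≤ ∫ t in Ioi (0:ℝ), C * (|1 - vf t^2| • φ (vf t)) :=
        setIntegral_mono_on hint hBint measurableSet_Ioi hpt
    _ = C * ∫ t in Ioi (0:ℝ), |1 - vf t^2| • φ (vf t) := MeasureTheory.integral_const_mul C _
    _ = C * ∫ s in vf '' Ioi 0, φ s := by rw [hsub]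
    _ ≤ C * ∫ s in Ioi (0:ℝ), φ s := by
        apply mul_le_mul_of_nonneg_left hIOI
        rw [hC]
        positivity
    _ = C * (k.factorial / L^(k+1)) := by rw [hφval]
    _ = k.factorial * 4^e * α / L^(k+1) := by rw [hC]; ring

end FIN2

/-- hypercontractive bound on the heat-semigroup integral in terms of
the influence. -/
theorem statement10 (n d l : ℕ) (hl : 1 ≤ l) (hld : l ≤ d)
    (f : (Fin n → Bool) → ℝ) (S : Finset (Fin n))
    (hval : ∀ x, ∃ m : ℤ, derivS S f x = m / 2 ^ (d - 1))
    (h0 : 0 < TInf f S) (h1 : TInf f S < 1) :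
    (∫ t in Set.Ioi (0 : ℝ),
        (Real.exp (2 * t) - 1) ^ (l - 1) * Real.exp (-(2 * l) * t) *
          norm2sq (heat t (derivS S f)))
      ≤ (Nat.factorial (l - 1)) * 4 ^ (d - 1) * TInf f S /
          Real.log (1 / TInf f S) ^ l := by
  obtain ⟨k, rfl⟩ : ∃ k, l = k + 1 := ⟨l - 1, by omega⟩
  have hke : k ≤ d - 1 := by omega
  have hαeq : norm2sq (derivS S f) = TInf f S := HC2.norm2sq_derivS f S
  have hval' : ∀ x, derivS S f x = 0 ∨ ((2:ℝ)^(d-1))⁻¹ ≤ |derivS S f x| := by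
    intro x
    obtain ⟨m, hm⟩ := hval x
    rcases eq_or_ne m 0 with rfl | hm0
    · left
      rw [hm]
      norm_num
    · right
      rw [hm, abs_div, abs_of_pos (show (0:ℝ) < 2^(d-1) from by positivity)]
      have hone : (1:ℝ) ≤ |(m:ℝ)| := by
        rw [← Int.cast_abs]
        exact_mod_cast Int.one_le_abs hm0
      rw [inv_eq_one_div]
      exact div_le_div_of_nonneg_right hone (by positivity)
  have hα0 : 0 < norm2sq (derivS S f) := by rw [hαeq]; exact h0
  have hα1 : norm2sq (derivS S f) < 1 := by rw [hαeq]; exact h1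
  have hmain := FIN2.main_integral k (d-1) hke (derivS S f) hval' hα0 hα1
  rw [hαeq] at hmain
  simp only [Nat.add_sub_cancel]
  have hfun : (fun t : ℝ => (Real.exp (2 * t) - 1) ^ k *
        Real.exp (-(2 * ((k+1 : ℕ):ℝ)) * t) * norm2sq (heat t (derivS S f)))
      = fun t : ℝ => (Real.exp (2*t) - 1)^k * Real.exp (-(2*((k:ℝ)+1))*t)
          * norm2sq (heat t (derivS S f)) := by
    funext t
    norm_num
  rw [hfun]
  exact hmain
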